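/- arXiv:2310.18870 — 5 statements merged into one kernel-verified Lean document; each statement's English description precedes it below -/
import Mathlib

section
/- Suppose (ρ̃, ũ) is a C^1 solution of the self-similar Euler–Poisson system (ũ+y)ρ̃' + ρ̃ũ' + 2ρ̃(ũ+y)/y = 0, ρ̃'/ρ̃ + (ũ+y)ũ' + 2ρ̃(ũ+y) = 0 on an interval containing y_* > 0, with ρ̃ > 0, and suppose ũ(y_*) + y_* = 1 (a sonic point). Then ρ̃(y_*) = 1/y_* and either (ρ̃'(y_*), ũ'(y_*)) = (-1/y_*^2, -1/y_*) (Larson–Penston type) or (ρ̃'(y_*), ũ'(y_*)) = (1/y_* - 3/y_*^2, 1/y_* - 1) (Hunter type). -/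
open Filter Topology Set

/-- At a sonic point `y_*` where `ũ(y_*) + y_* = 1`, a `C¹` solution of the
self-similar Euler–Poisson system must satisfy `ρ̃(y_*) = 1/y_*` and its first
derivatives must have either the Larson–Penston or the Hunter form. -/
theorem sonic_point_expansions
    (I : Set ℝ) (hI : IsOpen I) (hIpos : I ⊆ Set.Ioi 0)
    (ρ u : ℝ → ℝ) (ystar : ℝ) (hy : ystar ∈ I) (hystar : 0 < ystar)
    (hρ : ContDiffOn ℝ 1 ρ I) (hu : ContDiffOn ℝ 1 u I)
    (hpos : ∀ y ∈ I, 0 < ρ y)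
    (heq1 : ∀ y ∈ I, (u y + y) * deriv ρ y + ρ y * deriv u y
        + 2 * ρ y * (u y + y) / y = 0)
    (heq2 : ∀ y ∈ I, deriv ρ y / ρ y + (u y + y) * deriv u y
        + 2 * ρ y * (u y + y) = 0)
    (hsonic : u ystar + ystar = 1) :
    ρ ystar = 1 / ystar ∧
      ((deriv ρ ystar = -1 / ystar ^ 2 ∧ deriv u ystar = -1 / ystar) ∨
       (deriv ρ ystar = 1 / ystar - 3 / ystar ^ 2 ∧
        deriv u ystar = 1 / ystar - 1)) := by
  have hymem : I ∈ 𝓝 ystar := hI.mem_nhds hy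
  have hy0 : (ystar : ℝ) ≠ 0 := hystar.ne'
  have hρ0 : ρ ystar ≠ 0 := (hpos ystar hy).ne'
  have hud : HasDerivAt u (deriv u ystar) ystar :=
    ((hu.differentiableOn one_ne_zero).differentiableAt hymem).hasDerivAt
  have hρd : HasDerivAt ρ (deriv ρ ystar) ystar :=
    ((hρ.differentiableOn one_ne_zero).differentiableAt hymem).hasDerivAt
  set du := deriv u ystar with hdu
  set dρ := deriv ρ ystar with hdρv
  -- pointwise equations at ystar
  have h1 := heq1 ystar hy
  have h2 := heq2 ystar hy
  rw [hsonic] at h1 h2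
  have h1' : dρ + ρ ystar * du + 2 * ρ ystar / ystar = 0 := by
    rw [← h1]; ring
  have h2' : dρ + ρ ystar * du + 2 * (ρ ystar) ^ 2 = 0 := by
    field_simp at h2
    nlinarith [h2]
  -- step 1 : value of ρ at ystar
  have hρval : ρ ystar = 1 / ystar := by
    have hsub : 2 * (ρ ystar) ^ 2 = 2 * ρ ystar / ystar := by linarith
    field_simp at hsub ⊢
    nlinarith [hsub, hpos ystar hy]
  refine ⟨hρval, ?_⟩
  -- the key identity on I
  have key : ∀ y ∈ I, ((u y + y) ^ 2 - 1) * deriv u y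
      = 2 * (u y + y) * (1 / y - ρ y * (u y + y)) := by
    intro y hyI
    have k1 := heq1 y hyI
    have k2 := heq2 y hyI
    have kρ0 : ρ y ≠ 0 := (hpos y hyI).ne'
    have ky0 : y ≠ 0 := (ne_of_gt (hIpos hyI))
    have k2' : deriv ρ y + ρ y * ((u y + y) * deriv u y) + ρ y * (2 * ρ y * (u y + y)) = 0 := by
      have := congrArg (fun t => ρ y * t) k2
      simpa [mul_add, mul_div_cancel₀, kρ0, mul_comm, mul_left_comm] using this
    have k1' : y * ((u y + y) * deriv ρ y) + y * (ρ y * deriv u y) + 2 * ρ y * (u y + y) = 0 := by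
      have := congrArg (fun t => y * t) k1
      simp only [mul_add, mul_zero] at this
      rw [mul_div_cancel₀ _ ky0] at this
      linarith
    have hyy : y * (1 / y) = 1 := by field_simp
    have hmain : ρ y * y * (((u y + y) ^ 2 - 1) * deriv u y)
        = ρ y * y * (2 * (u y + y) * (1 / y - ρ y * (u y + y))) := by
      linear_combination (y * (u y + y)) * k2' - k1' - 2 * ρ y * (u y + y) * hyy
    exact mul_left_cancel₀ (mul_ne_zero kρ0 ky0) hmain
  -- derivatives of the two sides
  have hAy : HasDerivAt (fun y => u y + y) (du + 1) ystar := hud.add (hasDerivAt_id ystar)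
  have hG : HasDerivAt (fun y => (u y + y) ^ 2 - 1) (2 * (du + 1)) ystar := by
    have := (hAy.pow 2).sub_const 1
    simpa [hsonic] using this
  have hinv : HasDerivAt (fun y : ℝ => 1 / y) (-(ystar ^ 2)⁻¹) ystar := by
    simpa [one_div] using hasDerivAt_inv hy0
  have hg : HasDerivAt (fun y => 2 * (u y + y) * (1 / y - ρ y * (u y + y)))
      (2 * (du + 1) * (1 / ystar - ρ ystar * (u ystar + ystar))
        + 2 * (u ystar + ystar) * (-(ystar ^ 2)⁻¹ - (dρ * (u ystar + ystar) + ρ ystar * (du + 1))))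
      ystar := (hAy.const_mul 2).mul (hinv.sub (hρd.mul hAy))
  -- limit of slopes along punctured neighborhoods
  have hG0 : (u ystar + ystar) ^ 2 - 1 = 0 := by rw [hsonic]; ring
  have hg0 : 2 * (u ystar + ystar) * (1 / ystar - ρ ystar * (u ystar + ystar)) = 0 := by
    rw [hsonic, hρval]; ring
  have tG : Tendsto (slope (fun y => (u y + y) ^ 2 - 1) ystar) (𝓝[≠] ystar)
      (𝓝 (2 * (du + 1))) := hasDerivAt_iff_tendsto_slope.mp hG
  have tg : Tendsto (slope (fun y => 2 * (u y + y) * (1 / y - ρ y * (u y + y))) ystar)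
      (𝓝[≠] ystar)
      (𝓝 (2 * (du + 1) * (1 / ystar - ρ ystar * (u ystar + ystar))
        + 2 * (u ystar + ystar) * (-(ystar ^ 2)⁻¹ - (dρ * (u ystar + ystar) + ρ ystar * (du + 1))))) :=
    hasDerivAt_iff_tendsto_slope.mp hg
  have hcu : ContinuousAt (deriv u) ystar := by
    have hcw : ContinuousOn (derivWithin u I) I :=
      hu.continuousOn_derivWithin hI.uniqueDiffOn le_rfl
    have hcongr : ContinuousOn (deriv u) I :=
      hcw.congr fun x hx => (derivWithin_of_isOpen hI hx).symm
    exact hcongr.continuousAt hymem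
  have tu : Tendsto (deriv u) (𝓝[≠] ystar) (𝓝 du) :=
    hcu.tendsto.mono_left nhdsWithin_le_nhds
  have hEq : (fun y => slope (fun y => (u y + y) ^ 2 - 1) ystar y * deriv u y)
      =ᶠ[𝓝[≠] ystar] slope (fun y => 2 * (u y + y) * (1 / y - ρ y * (u y + y))) ystar := by
    filter_upwards [self_mem_nhdsWithin, mem_nhdsWithin_of_mem_nhds hymem] with y hyne hyI
    have hne : y - ystar ≠ 0 := sub_ne_zero.mpr hyne
    simp only [slope_def_field]
    rw [hG0, hg0, sub_zero, sub_zero, div_mul_eq_mul_div, key y hyI]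
  have hfin : 2 * (du + 1) * du
      = 2 * (du + 1) * (1 / ystar - ρ ystar * (u ystar + ystar))
        + 2 * (u ystar + ystar) * (-(ystar ^ 2)⁻¹ - (dρ * (u ystar + ystar) + ρ ystar * (du + 1))) :=
    tendsto_nhds_unique ((tG.mul tu).congr' hEq) tg
  rw [hsonic, hρval] at hfin
  rw [hρval] at h1'
  -- final algebra
  have hquad : (du + 1 / ystar) * (du - (1 / ystar - 1)) = 0 := by
    field_simp at hfin h1' ⊢
    nlinarith [hfin, h1']
  rcases mul_eq_zero.mp hquad with h | h
  · left
    have hdu' : du = -1 / ystar := by rw [neg_div]; linarith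
    constructor
    · rw [hdu'] at h1'
      field_simp at h1' ⊢
      linarith
    · exact hdu'
  · right
    have hdu' : du = 1 / ystar - 1 := by linarith
    constructor
    · rw [hdu'] at h1'
      field_simp at h1' ⊢
      linear_combination h1'
    · exact hdu'
end

section
/- Consider the model system x f' + g = F, g' = G on ℝ, where F, G are continuous and F is differentiable at 0. Then for every constant C the functions g(x) = F(0) + ∫_0^x G(s) ds and f(x) = C + ∫_0^x (F(s) - g(s))/s ds are well-defined (the integrand of f extends continuously to s = 0) and form a C^1 solution of the system. -/
/-- For continuous `F, G` with `F` differentiable at `0`, the explicit formulas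
`g(x) = F(0) + ∫₀ˣ G` and `f(x) = C + ∫₀ˣ (F(s) - g(s))/s ds` (with the integrand
extended continuously to `s = 0`) give a `C¹` solution of `x f' + g = F, g' = G`. -/
theorem model_system_solution (F G : ℝ → ℝ) (hF : Continuous F) (hG : Continuous G)
    (hF0 : DifferentiableAt ℝ F 0) (C : ℝ) :
    let g : ℝ → ℝ := fun x => F 0 + ∫ s in (0:ℝ)..x, G s
    let h : ℝ → ℝ := fun s => if s = 0 then deriv F 0 - G 0 else (F s - g s) / s
    let f : ℝ → ℝ := fun x => C + ∫ s in (0:ℝ)..x, h s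
    Continuous h ∧ ContDiff ℝ 1 f ∧ ContDiff ℝ 1 g ∧
      (∀ x : ℝ, x * deriv f x + g x = F x) ∧ (∀ x : ℝ, deriv g x = G x) := by
  intro g h f
  -- derivative of g
  have hgder : ∀ x : ℝ, HasDerivAt g (G x) x := fun x =>
    ((hG.integral_hasStrictDerivAt 0 x).hasDerivAt).const_add (F 0)
  have hgderiv : ∀ x : ℝ, deriv g x = G x := fun x => (hgder x).deriv
  have hgcont : Continuous g := by
    have : Differentiable ℝ g := fun x => (hgder x).differentiableAt
    exact this.continuous
  -- auxiliary function φ = F - g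
  set φ : ℝ → ℝ := fun s => F s - g s with hφdef
  have hφ0 : φ 0 = 0 := by simp [hφdef, g]
  have hφder : HasDerivAt φ (deriv F 0 - G 0) 0 :=
    (hF0.hasDerivAt).sub (hgder 0)
  have hφcont : Continuous φ := hF.sub hgcont
  -- continuity of h
  have hh_eq : ∀ s : ℝ, s ≠ 0 → h s = φ s / s := by
    intro s hs; simp [h, hs, hφdef]
  have hhcont : Continuous h := by
    rw [continuous_iff_continuousAt]
    intro x
    rcases eq_or_ne x 0 with rfl | hx
    · -- continuity at 0 via slope
      have hslope : Filter.Tendsto (slope φ 0) (nhdsWithin 0 {0}ᶜ)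
          (nhds (deriv F 0 - G 0)) := hasDerivAt_iff_tendsto_slope.mp hφder
      have : Filter.Tendsto h (nhdsWithin 0 {0}ᶜ) (nhds (h 0)) := by
        have h0 : h 0 = deriv F 0 - G 0 := by simp [h]
        rw [h0]
        refine hslope.congr' ?_
        filter_upwards [self_mem_nhdsWithin] with s hs
        rw [hh_eq s hs, slope_def_field, div_eq_inv_mul]
        simp [hφ0, div_eq_inv_mul]
      rw [ContinuousAt, ← nhdsNE_sup_pure 0]
      exact this.sup (tendsto_pure_nhds h 0)
    · have : ContinuousAt (fun s => φ s / s) x :=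
        (hφcont.continuousAt).div continuousAt_id hx
      refine this.congr ?_
      filter_upwards [isOpen_ne.mem_nhds hx] with s hs
      exact (hh_eq s hs).symm
  -- derivative of f
  have hfder : ∀ x : ℝ, HasDerivAt f (h x) x := fun x =>
    ((hhcont.integral_hasStrictDerivAt 0 x).hasDerivAt).const_add C
  have hfderiv : ∀ x : ℝ, deriv f x = h x := fun x => (hfder x).deriv
  refine ⟨hhcont, ?_, ?_, ?_, hgderiv⟩
  · rw [contDiff_one_iff_deriv]
    exact ⟨fun x => (hfder x).differentiableAt, by
      simpa [funext hfderiv] using hhcont⟩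
  · rw [contDiff_one_iff_deriv]
    exact ⟨fun x => (hgder x).differentiableAt, by
      simpa [funext hgderiv] using hG⟩
  · intro x
    rw [hfderiv x]
    rcases eq_or_ne x 0 with rfl | hx
    · simp [h, g]
    · rw [hh_eq x hx]
      field_simp [hφdef]
      simp [hφdef]
end

section
/- Let p solve the second-order ODE p'' + ((4z² - 2)/(z(z² - 1))) p' - (2/(z²(z² - 1))) p = 0 on an interval of z > 0 avoiding z = 1, and define g by p(z) = g(1 - 1/z²). Then g(ξ) satisfies the hypergeometric-type equation g'' + ((ξ - 2)/(2ξ(ξ - 1))) g' + (1/(2ξ(ξ - 1))) g = 0 at ξ = 1 - 1/z². -/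
lemma phi_deriv {z : ℝ} (hz : z ≠ 0) :
    HasDerivAt (fun w : ℝ => 1 - 1/w^2) (2/z^3) z := by
  have h1 : HasDerivAt (fun w : ℝ => w^2) (2*z) z := by
    simpa using (hasDerivAt_pow 2 z)
  have h2 : HasDerivAt (fun w : ℝ => (w^2)⁻¹) (-(2*z)/(z^2)^2) z :=
    h1.inv (pow_ne_zero 2 hz)
  have h := (hasDerivAt_const z (1:ℝ)).sub h2
  have : (0 : ℝ) - -(2*z)/(z^2)^2 = 2/z^3 := by field_simp; ring
  rw [this] at h
  have e : (fun w : ℝ => 1 - 1/w^2) = ((fun _ => (1:ℝ)) - fun w => (w^2)⁻¹) := by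
    funext w
    simp [one_div]
  rw [e]
  exact h

lemma psi_deriv {z : ℝ} (hz : z ≠ 0) :
    HasDerivAt (fun w : ℝ => 2/w^3) (-6/z^4) z := by
  have h1 : HasDerivAt (fun w : ℝ => w^3) (3*z^2) z := by
    simpa using (hasDerivAt_pow 3 z)
  have h2 : HasDerivAt (fun w : ℝ => (w^3)⁻¹) (-(3*z^2)/(z^3)^2) z :=
    h1.inv (pow_ne_zero 3 hz)
  have h := h2.const_mul (2:ℝ)
  have : (2:ℝ) * (-(3*z^2)/(z^3)^2) = -6/z^4 := by field_simp; ring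
  rw [this] at h
  simpa [div_eq_mul_inv] using h

/-- Substituting `p(z) = g(1 - 1/z²)` transforms the second-order ODE for `p`
into a hypergeometric-type equation for `g`. -/
theorem hypergeometric_transformation
    (I : Set ℝ) (hI : IsOpen I) (hIpos : I ⊆ Set.Ioi 0) (h1 : (1:ℝ) ∉ I)
    (p g : ℝ → ℝ)
    (hpd : ∀ z ∈ I, DifferentiableAt ℝ p z)
    (hpd' : ∀ z ∈ I, DifferentiableAt ℝ (deriv p) z)
    (hg : ∀ z ∈ I, DifferentiableAt ℝ g (1 - 1/z^2))
    (hg' : ∀ z ∈ I, DifferentiableAt ℝ (deriv g) (1 - 1/z^2))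
    (hsub : ∀ z ∈ I, p z = g (1 - 1/z^2))
    (hode : ∀ z ∈ I, deriv (deriv p) z
        + ((4*z^2 - 2)/(z*(z^2 - 1))) * deriv p z
        - (2/(z^2*(z^2 - 1))) * p z = 0) :
    ∀ z ∈ I,
      deriv (deriv g) (1 - 1/z^2)
          + (((1 - 1/z^2) - 2)/(2*(1 - 1/z^2)*((1 - 1/z^2) - 1))) * deriv g (1 - 1/z^2)
          + (1/(2*(1 - 1/z^2)*((1 - 1/z^2) - 1))) * g (1 - 1/z^2) = 0 := by
  -- first derivative formula
  have hD1 : ∀ w ∈ I, deriv p w = deriv g (1 - 1/w^2) * (2/w^3) := by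
    intro w hw
    have hw0 : w ≠ 0 := ne_of_gt (hIpos hw)
    have heq : p =ᶠ[nhds w] (fun z => g (1 - 1/z^2)) :=
      Filter.eventuallyEq_of_mem (hI.mem_nhds hw) hsub
    rw [heq.deriv_eq]
    exact (((hg w hw).hasDerivAt.comp w (phi_deriv hw0))).deriv
  intro z hz
  have hz0 : z ≠ 0 := ne_of_gt (hIpos hz)
  have hzpos : 0 < z := hIpos hz
  have hz1 : z ≠ 1 := fun h => h1 (h ▸ hz)
  have hz2 : z^2 - 1 ≠ 0 := by
    intro h
    have : z = 1 := by nlinarith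
    exact hz1 this
  -- second derivative
  have heq2 : deriv p =ᶠ[nhds z] (fun w => deriv g (1 - 1/w^2) * (2/w^3)) :=
    Filter.eventuallyEq_of_mem (hI.mem_nhds hz) hD1
  have hD2 : deriv (deriv p) z
      = (deriv (deriv g) (1 - 1/z^2) * (2/z^3)) * (2/z^3)
        + deriv g (1 - 1/z^2) * (-6/z^4) := by
    rw [heq2.deriv_eq]
    exact ((((hg' z hz).hasDerivAt.comp z (phi_deriv hz0))).mul (psi_deriv hz0)).deriv
  have h0 := hode z hz
  rw [hD2, hD1 z hz, hsub z hz] at h0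
  set A := deriv (deriv g) (1 - 1/z^2)
  set B := deriv g (1 - 1/z^2)
  set C := g (1 - 1/z^2)
  have hξ : (1 : ℝ) - 1/z^2 = (z^2 - 1)/z^2 := by field_simp
  rw [hξ]
  have hξ1 : (z^2 - 1)/z^2 - 1 = -(1/z^2) := by field_simp; ring
  rw [hξ1]
  field_simp at h0 ⊢
  have hbig : 2*z^10*(z^2-1) * (2*A*(z^2-1) + z^2*(z^2+1)*B - z^4*C) = 0 := by
    linear_combination (z^10*(z^2-1)) * h0
  have hfac : (2*z^10*(z^2-1) : ℝ) ≠ 0 := by positivity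
  have hmain : 2*A*(z^2-1) + z^2*(z^2+1)*B - z^4*C = 0 :=
    (mul_eq_zero.mp hbig).resolve_left hfac
  linear_combination hmain
end

section
/- If p, ω are C^1 near z = 1 with p(1) = 1, p'(1) = 1, ω(1) = -1, ω'(1) = 0 and they solve the homogeneous system z p' + z ω' + ω = 0, (1/z) p' + z ω' + (2/z²) p + (2/z² + 1) ω = 0, and q := p + ω, then q(z) = (z(z²-1)/2) p'(z) for z near 1, and p satisfies p'' + ((4z²-2)/(z(z²-1))) p' - (2/(z²(z²-1))) p = 0 away from z = 1. -/
/-- For a solution of the homogeneous system `L(p,ω) = 0` with the normalized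
Taylor data at `z = 1`, the combination `q = p + ω` satisfies
`q = (z(z²-1)/2) p'`, and `p` solves a second-order ODE away from `z = 1`. -/
theorem homogeneous_reduction
    (I : Set ℝ) (hI : IsOpen I) (hIpos : I ⊆ Set.Ioi 0) (h1 : (1:ℝ) ∈ I)
    (p ω : ℝ → ℝ)
    (hp : ∀ z ∈ I, DifferentiableAt ℝ p z)
    (hω : ∀ z ∈ I, DifferentiableAt ℝ ω z)
    (hp2 : ∀ z ∈ I, z ≠ 1 → DifferentiableAt ℝ (deriv p) z)
    (hω2 : ∀ z ∈ I, z ≠ 1 → DifferentiableAt ℝ (deriv ω) z)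
    (hbc1 : p 1 = 1) (hbc2 : deriv p 1 = 1) (hbc3 : ω 1 = -1) (hbc4 : deriv ω 1 = 0)
    (heq1 : ∀ z ∈ I, z * deriv p z + z * deriv ω z + ω z = 0)
    (heq2 : ∀ z ∈ I, deriv p z / z + z * deriv ω z + (2/z^2) * p z
        + (2/z^2 + 1) * ω z = 0) :
    (∀ z ∈ I, p z + ω z = z * (z^2 - 1) / 2 * deriv p z) ∧
      (∀ z ∈ I, z ≠ 1 →
        deriv (deriv p) z + ((4*z^2 - 2)/(z*(z^2 - 1))) * deriv p z
          - (2/(z^2*(z^2 - 1))) * p z = 0) := by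
  have hq : ∀ z ∈ I, p z + ω z = z * (z^2 - 1) / 2 * deriv p z := by
    intro z hz
    have hz0 : z ≠ 0 := ne_of_gt (hIpos hz)
    have e1 := heq1 z hz
    have e2 := heq2 z hz
    field_simp at e2
    have h2 : z^3 * (p z + ω z) = z^3 * (z * (z^2 - 1) / 2 * deriv p z) := by
      linear_combination (z^3/2) * e2 - (z^5/2) * e1
    exact mul_left_cancel₀ (pow_ne_zero 3 hz0) h2
  refine ⟨hq, ?_⟩
  intro z hz hne
  have hzpos : (0:ℝ) < z := hIpos hz
  have hz0 : z ≠ 0 := ne_of_gt hzpos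
  have hz1 : z - 1 ≠ 0 := sub_ne_zero.mpr hne
  have hz2 : z + 1 ≠ 0 := by positivity
  have hzsq : z^2 - 1 ≠ 0 := by
    intro h
    have h' : (z - 1) * (z + 1) = 0 := by linear_combination h
    rcases mul_eq_zero.mp h' with h'' | h''
    · exact hz1 h''
    · exact hz2 h''
  have hcube : HasDerivAt (fun x : ℝ => x * (x^2 - 1) / 2) ((3*z^2 - 1)/2) z := by
    have h : HasDerivAt (fun x : ℝ => (x^3 - x) / 2) ((3*z^2 - 1)/2) z := by
      have h0 := ((hasDerivAt_pow 3 z).sub (hasDerivAt_id z)).div_const 2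
      simp only [Pi.sub_apply, id] at h0
      exact h0.congr_deriv (by norm_num)
    have hfun : (fun x : ℝ => x * (x^2 - 1) / 2) = fun x : ℝ => (x^3 - x) / 2 := by
      funext x; ring
    rw [hfun]; exact h
  have hRd : HasDerivAt (fun x => x * (x^2 - 1) / 2 * deriv p x)
      ((3*z^2 - 1)/2 * deriv p z + z * (z^2 - 1) / 2 * deriv (deriv p) z) z :=
    hcube.mul (hp2 z hz hne).hasDerivAt
  have hev : (fun x => p x + ω x) =ᶠ[nhds z] (fun x => x * (x^2 - 1) / 2 * deriv p x) := by
    filter_upwards [hI.mem_nhds hz] with x hx using hq x hx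
  have hLd : HasDerivAt (fun x => p x + ω x) (deriv p z + deriv ω z) z :=
    (hp z hz).hasDerivAt.add (hω z hz).hasDerivAt
  have hRd' : HasDerivAt (fun x => p x + ω x)
      ((3*z^2 - 1)/2 * deriv p z + z * (z^2 - 1) / 2 * deriv (deriv p) z) z :=
    hRd.congr_of_eventuallyEq hev
  have key : deriv p z + deriv ω z
      = (3*z^2 - 1)/2 * deriv p z + z * (z^2 - 1) / 2 * deriv (deriv p) z :=
    hLd.unique hRd'
  have e1 := heq1 z hz
  have eq := hq z hz
  have T : z^2 * (z^2 - 1) * deriv (deriv p) z + (4*z^3 - 2*z) * deriv p z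
      - 2 * p z = 0 := by
    linear_combination (-2*z) * key + 2 * e1 - 2 * eq
  have hc : z^2 * (z^2 - 1) ≠ 0 := mul_ne_zero (pow_ne_zero 2 hz0) hzsq
  have h2 : (z^2 * (z^2 - 1)) * (deriv (deriv p) z + ((4*z^2 - 2)/(z*(z^2 - 1))) * deriv p z
      - (2/(z^2*(z^2 - 1))) * p z) = (z^2 * (z^2 - 1)) * 0 := by
    rw [mul_zero]
    have ha : (z^2 * (z^2 - 1)) * (((4*z^2 - 2)/(z*(z^2 - 1))) * deriv p z)
        = (4*z^3 - 2*z) * deriv p z := by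
      rw [div_mul_eq_mul_div, mul_div_assoc', div_eq_iff (mul_ne_zero hz0 hzsq)]
      ring
    have hb : (z^2 * (z^2 - 1)) * ((2/(z^2*(z^2 - 1))) * p z) = 2 * p z := by
      rw [div_mul_eq_mul_div, mul_div_assoc', div_eq_iff hc]
      ring
    calc (z^2 * (z^2 - 1)) * (deriv (deriv p) z + ((4*z^2 - 2)/(z*(z^2 - 1))) * deriv p z
          - (2/(z^2*(z^2 - 1))) * p z)
        = (z^2 * (z^2 - 1)) * deriv (deriv p) z
            + (z^2 * (z^2 - 1)) * (((4*z^2 - 2)/(z*(z^2 - 1))) * deriv p z)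
            - (z^2 * (z^2 - 1)) * ((2/(z^2*(z^2 - 1))) * p z) := by ring
      _ = z^2 * (z^2 - 1) * deriv (deriv p) z + (4*z^3 - 2*z) * deriv p z - 2 * p z := by
          rw [ha, hb]
      _ = 0 := T
  exact mul_left_cancel₀ hc h2
end

section
/- Let ψ, ψ̃ : [a,∞) → ℝ be C^1. Suppose ψ has finitely many zeros t₁ < ⋯ < t_n, all contained in [a, Y₀], and there exists δ > 0 such that |ψ'| > δ on ∪ᵢ [tᵢ - 1/100, tᵢ + 1/100] ⊂ (a, Y₀), ψ is monotone on each such interval, and |ψ| > δ on [a,∞) ∖ ∪ᵢ (tᵢ - 1/100, tᵢ + 1/100). If |ψ̃| < δ/100 and |ψ̃'| < δ/100 on [a, Y₀ + 1], and ψ + ψ̃ has no zeros on [Y₀+1, ∞), then ψ + ψ̃ has exactly n zeros on [a,∞). -/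
lemma aux_unique_zero {f : ℝ → ℝ} {L R : ℝ}
    (hinj : Set.InjOn f (Set.Icc L R)) (h : 0 ∈ f '' Set.Icc L R) :
    ∃ x, x ∈ Set.Icc L R ∧ f x = 0 ∧ ∀ y ∈ Set.Icc L R, f y = 0 → y = x := by
  obtain ⟨x, hx, hfx⟩ := h
  exact ⟨x, hx, hfx, fun y hy hfy => hinj hy hx (by rw [hfy, hfx])⟩

/-- Zero-counting under a small `C¹` perturbation: if `ψ` has exactly the `n`
zeros `t 0 < ⋯ < t (n-1)` in `[a,∞)`, all nondegenerate and located in `(a, Y₀)`,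
and `ψ̃` is a sufficiently small `C¹` perturbation on `[a, Y₀+1]` such that
`ψ + ψ̃` does not vanish on `[Y₀+1, ∞)`, then `ψ + ψ̃` has exactly `n` zeros. -/
theorem zero_counting (a Y₀ δ : ℝ) (n : ℕ) (t : Fin n → ℝ) (ψ ψ' : ℝ → ℝ)
    (hδ : 0 < δ) (ht : StrictMono t)
    (hψC1 : ContDiffOn ℝ 1 ψ (Set.Ici a))
    (hψ'C1 : ContDiffOn ℝ 1 ψ' (Set.Ici a))
    (hzeros : {y | y ∈ Set.Ici a ∧ ψ y = 0} = Set.range t)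
    (hsub : ∀ i, Set.Icc (t i - 1/100) (t i + 1/100) ⊆ Set.Ioo a Y₀)
    (hdisj : ∀ i j, i ≠ j →
      Disjoint (Set.Icc (t i - 1/100) (t i + 1/100))
        (Set.Icc (t j - 1/100) (t j + 1/100)))
    (hder : ∀ i, ∀ y ∈ Set.Icc (t i - 1/100) (t i + 1/100), δ < |deriv ψ y|)
    (hmon : ∀ i, MonotoneOn ψ (Set.Icc (t i - 1/100) (t i + 1/100)) ∨
      AntitoneOn ψ (Set.Icc (t i - 1/100) (t i + 1/100)))
    (hbig : ∀ y ∈ Set.Ici a,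
      (∀ i, y ∉ Set.Ioo (t i - 1/100) (t i + 1/100)) → δ < |ψ y|)
    (hsmall : ∀ y ∈ Set.Icc a (Y₀ + 1), |ψ' y| < δ/100 ∧ |deriv ψ' y| < δ/100)
    (hnozero : ∀ y ∈ Set.Ici (Y₀ + 1), ψ y + ψ' y ≠ 0) :
    Set.ncard {y | y ∈ Set.Ici a ∧ ψ y + ψ' y = 0} = n := by
  -- basic facts
  have hIcc_sub : ∀ i, Set.Icc (t i - 1/100) (t i + 1/100) ⊆ Set.Icc a (Y₀ + 1) := by
    intro i y hy
    obtain ⟨h1, h2⟩ := hsub i hy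
    exact ⟨h1.le, by linarith⟩
  have hIcc_Ioi : ∀ i, Set.Icc (t i - 1/100) (t i + 1/100) ⊆ Set.Ioi a :=
    fun i y hy => (hsub i hy).1
  have hψt : ∀ i, ψ (t i) = 0 := by
    intro i
    have : t i ∈ {y | y ∈ Set.Ici a ∧ ψ y = 0} := hzeros ▸ ⟨i, rfl⟩
    exact this.2
  have htmem : ∀ i, t i ∈ Set.Icc (t i - 1/100) (t i + 1/100) := by
    intro i; constructor <;> norm_num
  -- endpoints are in no open interval
  have hend : ∀ i, ∀ e, e ∈ Set.Icc (t i - 1/100) (t i + 1/100) →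
      e ∉ Set.Ioo (t i - 1/100) (t i + 1/100) →
      (∀ j, e ∉ Set.Ioo (t j - 1/100) (t j + 1/100)) := by
    intro i e heI hnot j hj
    by_cases hij : j = i
    · subst hij; exact hnot hj
    · exact Set.disjoint_left.mp (hdisj i j (fun h => hij h.symm)) heI
        (Set.Ioo_subset_Icc_self hj)
  -- differentiability and continuity of derivatives on Ioi a
  have hdψ : ∀ y ∈ Set.Ioi a, DifferentiableAt ℝ ψ y := by
    intro y hy
    exact (hψC1.contDiffAt (Ici_mem_nhds hy)).differentiableAt one_ne_zero
  have hdψ' : ∀ y ∈ Set.Ioi a, DifferentiableAt ℝ ψ' y := by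
    intro y hy
    exact (hψ'C1.contDiffAt (Ici_mem_nhds hy)).differentiableAt one_ne_zero
  have hcd : ContinuousOn (deriv ψ) (Set.Ioi a) :=
    (hψC1.mono Set.Ioi_subset_Ici_self).continuousOn_deriv_of_isOpen isOpen_Ioi le_rfl
  -- key: unique zero in each interval
  have key : ∀ i : Fin n, ∃ x, x ∈ Set.Icc (t i - 1/100) (t i + 1/100) ∧
      ψ x + ψ' x = 0 ∧
      ∀ y ∈ Set.Icc (t i - 1/100) (t i + 1/100), ψ y + ψ' y = 0 → y = x := by
    intro i
    set L := t i - 1/100 with hL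
    set R := t i + 1/100 with hR
    have hLR : L ≤ R := by rw [hL, hR]; linarith
    have hIsub : Set.Icc L R ⊆ Set.Ioi a := hIcc_Ioi i
    have hIsub2 : Set.Icc L R ⊆ Set.Icc a (Y₀ + 1) := hIcc_sub i
    have hIsub3 : Set.Icc L R ⊆ Set.Ici a := fun y hy => Set.mem_Ici.mpr (Set.mem_Ioi.mp (hIsub hy)).le
    have hcψ : ContinuousOn ψ (Set.Icc L R) := hψC1.continuousOn.mono hIsub3
    have hcψ' : ContinuousOn ψ' (Set.Icc L R) := hψ'C1.continuousOn.mono hIsub3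
    have hcf : ContinuousOn (fun y => ψ y + ψ' y) (Set.Icc L R) := hcψ.add hcψ'
    -- endpoint estimates on ψ'
    have hLmem : L ∈ Set.Icc L R := ⟨le_rfl, hLR⟩
    have hRmem : R ∈ Set.Icc L R := ⟨hLR, le_rfl⟩
    have hψ'L : |ψ' L| < δ/100 := (hsmall L (hIsub2 hLmem)).1
    have hψ'R : |ψ' R| < δ/100 := (hsmall R (hIsub2 hRmem)).1
    -- |ψ| > δ at endpoints
    have hψL : δ < |ψ L| := hbig L (hIsub3 hLmem)
      (hend i L hLmem (fun h => absurd h.1 (lt_irrefl L)))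
    have hψR : δ < |ψ R| := hbig R (hIsub3 hRmem)
      (hend i R hRmem (fun h => absurd h.2 (lt_irrefl R)))
    -- sign dichotomy for deriv ψ on Icc L R
    have hcdI : ContinuousOn (deriv ψ) (Set.Icc L R) := hcd.mono hIsub
    have hsign : (∀ y ∈ Set.Icc L R, δ < deriv ψ y) ∨
        (∀ y ∈ Set.Icc L R, deriv ψ y < -δ) := by
      have hsgn : ∀ y ∈ Set.Icc L R, δ < deriv ψ y ∨ deriv ψ y < -δ := by
        intro y hy
        have h := hder i y hy
        rcases abs_cases (deriv ψ y) with ⟨he, _⟩ | ⟨he, _⟩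
        · left; rw [he] at h; exact h
        · right; rw [he] at h; linarith
      rcases hsgn (t i) (htmem i) with h | h
      · left
        intro y hy
        rcases hsgn y hy with h1 | h1
        · exact h1
        · exfalso
          have huIcc : Set.uIcc y (t i) ⊆ Set.Icc L R := Set.uIcc_subset_Icc hy (htmem i)
          have := intermediate_value_uIcc (hcdI.mono huIcc)
          have h0 : (0:ℝ) ∈ Set.uIcc (deriv ψ y) (deriv ψ (t i)) := by
            rw [Set.mem_uIcc]; left; constructor <;> linarith
          obtain ⟨z, hz, hz0⟩ := this h0
          have := hder i z (huIcc hz)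
          rw [hz0] at this; simp at this; linarith
      · right
        intro y hy
        rcases hsgn y hy with h1 | h1
        · exfalso
          have huIcc : Set.uIcc y (t i) ⊆ Set.Icc L R := Set.uIcc_subset_Icc hy (htmem i)
          have := intermediate_value_uIcc (hcdI.mono huIcc)
          have h0 : (0:ℝ) ∈ Set.uIcc (deriv ψ y) (deriv ψ (t i)) := by
            rw [Set.mem_uIcc]; right; constructor <;> linarith
          obtain ⟨z, hz, hz0⟩ := this h0
          have := hder i z (huIcc hz)
          rw [hz0] at this; simp at this; linarith
        · exact h1
    -- derivative of the sum
    have hderiv_add : ∀ x ∈ Set.Ioo L R,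
        deriv (fun y => ψ y + ψ' y) x = deriv ψ x + deriv ψ' x := by
      intro x hx
      exact deriv_add (hdψ x (hIsub (Set.Ioo_subset_Icc_self hx)))
        (hdψ' x (hIsub (Set.Ioo_subset_Icc_self hx)))
    have hψ'd : ∀ x ∈ Set.Icc L R, |deriv ψ' x| < δ/100 :=
      fun x hx => (hsmall x (hIsub2 hx)).2
    rcases hsign with hpos | hneg
    · -- increasing case
      have hmono : StrictMonoOn ψ (Set.Icc L R) := by
        apply strictMonoOn_of_deriv_pos (convex_Icc L R) hcψ
        intro x hx
        rw [interior_Icc] at hx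
        have := hpos x (Set.Ioo_subset_Icc_self hx); linarith
      have hψLlt : ψ L < -δ := by
        have : ψ L < ψ (t i) := hmono hLmem (htmem i) (by rw [hL]; linarith)
        rw [hψt i] at this
        rcases abs_lt.not.mp (not_lt.mpr hψL.le) with _
        rcases lt_or_ge (ψ L) (-δ) with h | h
        · exact h
        · exfalso; rw [abs_of_nonpos this.le] at hψL; linarith
      have hψRgt : δ < ψ R := by
        have : ψ (t i) < ψ R := hmono (htmem i) hRmem (by rw [hR]; linarith)
        rw [hψt i] at this
        rw [abs_of_pos this] at hψR; exact hψR
      have hfL : ψ L + ψ' L < 0 := by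
        have := abs_lt.mp hψ'L; linarith [this.2]
      have hfR : 0 < ψ R + ψ' R := by
        have := abs_lt.mp hψ'R; linarith [this.1]
      have hfmono : StrictMonoOn (fun y => ψ y + ψ' y) (Set.Icc L R) := by
        apply strictMonoOn_of_deriv_pos (convex_Icc L R) hcf
        intro x hx
        rw [interior_Icc] at hx
        rw [hderiv_add x hx]
        have h1 := hpos x (Set.Ioo_subset_Icc_self hx)
        have h2 := abs_lt.mp (hψ'd x (Set.Ioo_subset_Icc_self hx))
        linarith [h2.1]
      apply aux_unique_zero hfmono.injOn
      exact intermediate_value_Icc hLR hcf ⟨hfL.le, hfR.le⟩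
    · -- decreasing case
      have hmono : StrictAntiOn ψ (Set.Icc L R) := by
        apply strictAntiOn_of_deriv_neg (convex_Icc L R) hcψ
        intro x hx
        rw [interior_Icc] at hx
        have := hneg x (Set.Ioo_subset_Icc_self hx); linarith
      have hψLlt : δ < ψ L := by
        have : ψ (t i) < ψ L := hmono hLmem (htmem i) (by rw [hL]; linarith)
        rw [hψt i] at this
        rw [abs_of_pos this] at hψL; exact hψL
      have hψRgt : ψ R < -δ := by
        have : ψ R < ψ (t i) := hmono (htmem i) hRmem (by rw [hR]; linarith)
        rw [hψt i] at this
        rcases lt_or_ge (ψ R) (-δ) with h | h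
        · exact h
        · exfalso; rw [abs_of_nonpos this.le] at hψR; linarith
      have hfL : 0 < ψ L + ψ' L := by
        have := abs_lt.mp hψ'L; linarith [this.1]
      have hfR : ψ R + ψ' R < 0 := by
        have := abs_lt.mp hψ'R; linarith [this.2]
      have hfmono : StrictAntiOn (fun y => ψ y + ψ' y) (Set.Icc L R) := by
        apply strictAntiOn_of_deriv_neg (convex_Icc L R) hcf
        intro x hx
        rw [interior_Icc] at hx
        rw [hderiv_add x hx]
        have h1 := hneg x (Set.Ioo_subset_Icc_self hx)
        have h2 := abs_lt.mp (hψ'd x (Set.Ioo_subset_Icc_self hx))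
        linarith [h2.2]
      apply aux_unique_zero hfmono.injOn
      exact intermediate_value_Icc' hLR hcf ⟨hfR.le, hfL.le⟩
  -- collect zeros
  choose s hs1 hs2 hs3 using key
  have hZ : {y | y ∈ Set.Ici a ∧ ψ y + ψ' y = 0} = Set.range s := by
    ext y
    constructor
    · rintro ⟨hya, hy0⟩
      have hyY : y < Y₀ + 1 := by
        by_contra h
        exact hnozero y (le_of_not_gt h) hy0
      have hyI : y ∈ Set.Icc a (Y₀ + 1) := ⟨hya, hyY.le⟩
      have hex : ∃ i, y ∈ Set.Ioo (t i - 1/100) (t i + 1/100) := by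
        by_contra h
        push_neg at h
        have hb := hbig y hya h
        have hsm := (hsmall y hyI).1
        have : ψ y = -ψ' y := by linarith
        rw [this, abs_neg] at hb
        linarith
      obtain ⟨i, hi⟩ := hex
      exact ⟨i, (hs3 i y (Set.Ioo_subset_Icc_self hi) hy0).symm⟩
    · rintro ⟨i, rfl⟩
      exact ⟨Set.mem_Ici.mpr (Set.mem_Ioi.mp (hIcc_Ioi i (hs1 i))).le, hs2 i⟩
  have hsinj : Function.Injective s := by
    intro i j hij
    by_contra h
    exact Set.disjoint_left.mp (hdisj i j h) (hs1 i) (hij ▸ hs1 j)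
  rw [hZ, ← Set.image_univ, Set.ncard_image_of_injective _ hsinj, Set.ncard_univ,
    Nat.card_eq_fintype_card, Fintype.card_fin]
end
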